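/- arXiv:1502.07532 — 3 statements merged into one kernel-verified Lean document; each statement's English description precedes it below -/
import Mathlib

section
/- For positive weights w_1,...,w_n with max_i w_i / min_i w_i = η, the effective sample size ESS(w) = (Σ w_i)² / (Σ w_i²) satisfies ESS(w) ≥ 4(ηn + 1 − η²)/(η+1)². -/
/-!
Every weight lies in `[m, M]`, so `(w i - m) (M - w i) ≥ 0`, i.e. `w i ^ 2 ≤ (m + M) w i - m M`.
Summing gives `Σ w² ≤ (m + M) S - n m M` with `S = Σ w`; multiplying by `4 n m M` and completing
the square yields `4 n m M Σ w² ≤ (m + M)² S²`, the Pólya–Szegő bound `ESS(w) ≥ 4 n η / (η + 1)²`.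
It dominates `4 (η n + 1 - η²) / (η + 1)²` because `η ≥ 1`.
-/

open Finset

noncomputable def effectiveSampleSize {ι : Type*} [Fintype ι] (w : ι → ℝ) : ℝ :=
  (∑ i, w i) ^ 2 / ∑ i, w i ^ 2

section Bounds

variable {ι : Type*} (s : Finset ι) {f : ι → ℝ} {m M : ℝ}

theorem sum_sq_le_of_mem_Icc (hm : ∀ i ∈ s, m ≤ f i) (hM : ∀ i ∈ s, f i ≤ M) :
    ∑ i ∈ s, f i ^ 2 ≤ (m + M) * ∑ i ∈ s, f i - #s * m * M := by
  have hpt : ∀ i ∈ s, f i ^ 2 ≤ (m + M) * f i - m * M := fun i hi => by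
    nlinarith [mul_nonneg (sub_nonneg.2 (hm i hi)) (sub_nonneg.2 (hM i hi))]
  calc ∑ i ∈ s, f i ^ 2 ≤ ∑ i ∈ s, ((m + M) * f i - m * M) := sum_le_sum hpt
    _ = (m + M) * ∑ i ∈ s, f i - #s * m * M := by
      rw [sum_sub_distrib, ← mul_sum, sum_const, nsmul_eq_mul, mul_assoc]

theorem four_mul_card_mul_sum_sq_le (hm0 : 0 ≤ m) (hmM : m ≤ M)
    (hm : ∀ i ∈ s, m ≤ f i) (hM : ∀ i ∈ s, f i ≤ M) :
    4 * #s * m * M * ∑ i ∈ s, f i ^ 2 ≤ (m + M) ^ 2 * (∑ i ∈ s, f i) ^ 2 := by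
  set S := ∑ i ∈ s, f i
  have hnmM : 0 ≤ 4 * (#s : ℝ) * m * M := by have := hm0.trans hmM; positivity
  calc 4 * #s * m * M * ∑ i ∈ s, f i ^ 2
      ≤ 4 * #s * m * M * ((m + M) * S - #s * m * M) :=
        mul_le_mul_of_nonneg_left (sum_sq_le_of_mem_Icc s hm hM) hnmM
    _ = (m + M) ^ 2 * S ^ 2 - ((m + M) * S - 2 * #s * m * M) ^ 2 := by ring
    _ ≤ (m + M) ^ 2 * S ^ 2 := sub_le_self _ (sq_nonneg _)

end Bounds

theorem four_mul_card_mul_div_le_effectiveSampleSize {ι : Type*} [Fintype ι] [Nonempty ι]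
    {w : ι → ℝ} {m M : ℝ} (hm0 : 0 < m) (hm : ∀ i, m ≤ w i) (hM : ∀ i, w i ≤ M) :
    4 * Fintype.card ι * m * M / (m + M) ^ 2 ≤ effectiveSampleSize w := by
  obtain ⟨i⟩ := ‹Nonempty ι›
  have hmM : m ≤ M := (hm i).trans (hM i)
  have hM0 : 0 < M := hm0.trans_le hmM
  have hQ : 0 < ∑ i, w i ^ 2 :=
    sum_pos (fun j _ => pow_pos (hm0.trans_le (hm j)) 2) univ_nonempty
  rw [effectiveSampleSize, div_le_div_iff₀ (by positivity) hQ, mul_comm ((∑ i, w i) ^ 2)]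
  exact four_mul_card_mul_sum_sq_le univ hm0.le hmM (fun j _ => hm j) (fun j _ => hM j)

theorem chopthin_ess_lower_bound (n : ℕ) (hn : 1 ≤ n) (w : Fin n → ℝ)
    (hw : ∀ i, 0 < w i) (η : ℝ)
    (hη : η = (Finset.univ.sup' (Finset.univ_nonempty_iff.mpr (Fin.pos_iff_nonempty.mp hn)) w) /
              (Finset.univ.inf' (Finset.univ_nonempty_iff.mpr (Fin.pos_iff_nonempty.mp hn)) w)) :
    (∑ i, w i) ^ 2 / (∑ i, w i ^ 2) ≥ 4 * (η * n + 1 - η ^ 2) / (η + 1) ^ 2 := by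
  have hne : (univ : Finset (Fin n)).Nonempty := univ_nonempty_iff.mpr (Fin.pos_iff_nonempty.mp hn)
  have : Nonempty (Fin n) := univ_nonempty_iff.mp hne
  set m := univ.inf' hne w
  set M := univ.sup' hne w
  have hm : ∀ i, m ≤ w i := fun i => inf'_le w (mem_univ i)
  have hM : ∀ i, w i ≤ M := fun i => le_sup' w (mem_univ i)
  have hm0 : 0 < m := (lt_inf'_iff hne).2 fun i _ => hw i
  have hη1 : 1 ≤ η := hη ▸ (one_le_div hm0).2 ((hm ⟨0, hn⟩).trans (hM _))
  have hMm : M = η * m := by rw [hη]; field_simp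
  calc 4 * (η * n + 1 - η ^ 2) / (η + 1) ^ 2 ≤ 4 * n * η / (η + 1) ^ 2 := by
        gcongr ?_ / _; nlinarith
    _ = 4 * Fintype.card (Fin n) * m * M / (m + M) ^ 2 := by
        rw [Fintype.card_fin, hMm]; field_simp; ring
    _ ≤ effectiveSampleSize w := four_mul_card_mul_div_le_effectiveSampleSize hm0 hm hM
end

section
/- For η > 1, n ≥ 2, the function h(x) = (x + η(n−x))² / (x − 1 + (n−x+1)η²) satisfies h(x) ≥ 4(ηn + 1 − η²)/(η+1)² for all x in [1, n−1]. -/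
/-!
With `K = η n + 1 - η²` and `D = x - 1 + (n - x + 1) η²` one has the exact identity
`(η + 1)(x + η (n - x)) = K + D`, so `(η + 1)² h(x) = (K + D)² / D ≥ 4 K` by AM-GM.
-/

lemma four_mul_le_sq_add_div {k d : ℝ} (hd : 0 < d) : 4 * k ≤ (k + d) ^ 2 / d := by
  rw [le_div_iff₀ hd]
  exact four_mul_le_sq_add k d

lemma four_mul_div_sq_le_sq_div {c s k d : ℝ} (hc : c ≠ 0) (hd : 0 < d)
    (hcs : c * s = k + d) : 4 * k / c ^ 2 ≤ s ^ 2 / d :=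
  calc 4 * k / c ^ 2 ≤ (k + d) ^ 2 / d / c ^ 2 := by gcongr; exact four_mul_le_sq_add_div hd
    _ = s ^ 2 / d := by rw [← hcs]; field_simp

lemma add_one_mul_add_mul_sub (η n x : ℝ) :
    (η + 1) * (x + η * (n - x)) = (η * n + 1 - η ^ 2) + (x - 1 + (n - x + 1) * η ^ 2) := by
  ring

theorem h_lower_bound_general (η : ℝ) (hη : 1 < η) (n : ℕ)
    (hden : ∀ x ∈ Set.Icc (1 : ℝ) (n - 1), 0 < x - 1 + (n - x + 1) * η ^ 2) :
    ∀ x ∈ Set.Icc (1 : ℝ) (n - 1),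
      (x + η * (n - x)) ^ 2 / (x - 1 + (n - x + 1) * η ^ 2) ≥
        4 * (η * n + 1 - η ^ 2) / (η + 1) ^ 2 := by
  intro x hx
  exact four_mul_div_sq_le_sq_div (by linarith) (hden x hx) (add_one_mul_add_mul_sub η n x)

theorem h_lower_bound (η : ℝ) (hη : 1 < η) (n : ℕ) (hn : 2 ≤ n)
    (hden : ∀ x ∈ Set.Icc (1 : ℝ) (n - 1), 0 < x - 1 + (n - x + 1) * η ^ 2) :
    ∀ x ∈ Set.Icc (1 : ℝ) (n - 1),
      (x + η * (n - x)) ^ 2 / (x - 1 + (n - x + 1) * η ^ 2) ≥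
        4 * (η * n + 1 - η ^ 2) / (η + 1) ^ 2 :=
  h_lower_bound_general η hη n hden
end

section
/- The constraint that ⌈w/(ηa)⌉ ≤ ⌊w/a⌋ holds for all w ≥ a forces η ≥ 2. -/
theorem two_le_of_ceil_div_le_floor {η : ℝ} (hη : 0 < η)
    (h : ∀ t : ℝ, 1 ≤ t → ⌈t / η⌉ ≤ ⌊t⌋) : 2 ≤ η := by
  by_contra! hη2
  -- a point of `(1, 2)` beyond `η`: there the floor is `1` but the ceiling is at least `2`
  obtain ⟨t, hmt, ht2⟩ := exists_between (max_lt one_lt_two hη2)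
  have h1t : 1 ≤ t := (le_max_left 1 η).trans hmt.le
  have hηt : η < t := (le_max_right 1 η).trans_lt hmt
  have hfloor : ⌊t⌋ = 1 := Int.floor_eq_iff.mpr ⟨by exact_mod_cast h1t, by norm_num [ht2]⟩
  have hceil : 1 < ⌈t / η⌉ := Int.lt_ceil.mpr (by exact_mod_cast (one_lt_div hη).mpr hηt)
  have := h t h1t
  omega

theorem step_chopthin_eta_ge_two (a η : ℝ) (ha : 0 < a) (hη : 0 < η)
    (h : ∀ w : ℝ, a ≤ w → ⌈w / (η * a)⌉ ≤ ⌊w / a⌋) :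
    2 ≤ η := by
  refine two_le_of_ceil_div_le_floor hη fun t ht => ?_
  have hw := h (t * a) (le_mul_of_one_le_left ha.le ht)
  rwa [mul_div_cancel_right₀ t ha.ne', mul_div_mul_right t η ha.ne'] at hw
end
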